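/- arXiv:2505.08909 — 4 statements merged into one kernel-verified Lean document; each statement's English description precedes it below -/
import Mathlib

section
/- Let D : H → H be γ-cocoercive with γ > 0, let β > 0, and let F : H → ℝ ∪ {∞} be a function such that for all x, D(x) ∈ Prox_{F/β}(x), i.e., β(x − D(x)) ∈ ∂F(D(x)) in the sense that D(x) minimizes u ↦ F(u) + (β/2)‖u−x‖². Then F is r-weakly convex with r = β(1−γ), in the sense that for all u,v and all subgradients p ∈ ∂F(u), q ∈ ∂F(v) arising as p = β(x−u), q = β(y−v) with u = D(x), v = D(y), one has ⟨p − q, u − v⟩ + β(1−γ)‖u−v‖² ≥ 0. -/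
open RealInnerProductSpace

/-- If D is γ-cocoercive (γ > 0) and D x is a proximal point of F/β at every x,
then F is r-weakly convex with r = β(1-γ) in the monotonicity sense:
for subgradients p = β(x - D x) ∈ ∂F(D x), q = β(y - D y) ∈ ∂F(D y),
⟨p - q, D x - D y⟩ + β(1-γ)‖D x - D y‖² ≥ 0. -/
theorem cocoercive_prox_weaklyConvex
    {H : Type*} [NormedAddCommGroup H] [InnerProductSpace ℝ H]
    (D : H → H) (γ β : ℝ) (hγ : 0 < γ) (hβ : 0 < β)
    (F : H → EReal)
    (hcoco : ∀ x y : H, ⟪x - y, D x - D y⟫ ≥ γ * ‖D x - D y‖ ^ 2)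
    (hprox : ∀ x u : H,
      F (D x) + (((β / 2) * ‖D x - x‖ ^ 2 : ℝ) : EReal) ≤
        F u + (((β / 2) * ‖u - x‖ ^ 2 : ℝ) : EReal)) :
    ∀ x y : H,
      ⟪β • (x - D x) - β • (y - D y), D x - D y⟫ +
        β * (1 - γ) * ‖D x - D y‖ ^ 2 ≥ 0 := by
  intro x y
  have h := hcoco x y
  have h1 : ⟪β • (x - D x) - β • (y - D y), D x - D y⟫
      = β * ⟪x - y, D x - D y⟫ - β * ‖D x - D y‖ ^ 2 := by
    rw [← smul_sub, real_inner_smul_left]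
    have h2 : (x - D x) - (y - D y) = (x - y) - (D x - D y) := by abel
    rw [h2, inner_sub_left, real_inner_self_eq_norm_sq]
    ring
  rw [h1]
  nlinarith [mul_le_mul_of_nonneg_left h hβ.le]
end

section
/- Let D : H → H be γ-cocoercive with γ ∈ (0,1) and (1/γ)-Lipschitz, let t ∈ [0,1) with t ≥ (1−2γ)/(2−2γ), and set Dᵗ = tD + (1−t)I, a = Dᵗ(x) − Dᵗ(y), b = x − y. Then ‖b − a‖² ≤ (t²/(1−t)²)‖a‖² for all x,y ∈ H. -/
open RealInnerProductSpace

theorem case1_key_inequality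
    {H : Type*} [NormedAddCommGroup H] [InnerProductSpace ℝ H]
    (D : H → H) (γ t : ℝ) (hγ0 : 0 < γ) (hγ1 : γ < 1)
    (ht0 : 0 ≤ t) (ht1 : t < 1) (htl : t ≥ (1 - 2 * γ) / (2 - 2 * γ))
    (hcoco : ∀ x y : H, ⟪x - y, D x - D y⟫ ≥ γ * ‖D x - D y‖ ^ 2)
    (hlip : ∀ x y : H, ‖D x - D y‖ ≤ (1 / γ) * ‖x - y‖) :
    ∀ x y : H,
      ‖(x - y) - ((t • D x + (1 - t) • x) - (t • D y + (1 - t) • y))‖ ^ 2 ≤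
        (t ^ 2 / (1 - t) ^ 2) *
          ‖(t • D x + (1 - t) • x) - (t • D y + (1 - t) • y)‖ ^ 2 := by
  intro x y
  set u := D x - D y with hu
  set v := x - y with hv
  have ht1' : (0:ℝ) < 1 - t := by linarith
  have ha : (t • D x + (1 - t) • x) - (t • D y + (1 - t) • y) = t • u + (1 - t) • v := by
    simp only [hu, hv, smul_sub]; abel
  have hb : v - (t • u + (1 - t) • v) = t • (v - u) := by
    simp only [smul_sub]
    rw [sub_smul, one_smul]
    abel
  rw [ha, hb]
  have h1 : ‖t • (v - u)‖ ^ 2 = t ^ 2 * ‖v - u‖ ^ 2 := by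
    rw [norm_smul, Real.norm_eq_abs, abs_of_nonneg ht0, mul_pow]
  have h2 : ‖v - u‖ ^ 2 = ‖v‖ ^ 2 - 2 * ⟪v, u⟫ + ‖u‖ ^ 2 := norm_sub_sq_real v u
  have h3 : ‖t • u + (1 - t) • v‖ ^ 2
      = t ^ 2 * ‖u‖ ^ 2 + 2 * (t * (1 - t) * ⟪u, v⟫) + (1 - t) ^ 2 * ‖v‖ ^ 2 := by
    rw [norm_add_sq_real, real_inner_smul_left, real_inner_smul_right, norm_smul, norm_smul,
      Real.norm_eq_abs, Real.norm_eq_abs, abs_of_nonneg ht0, abs_of_nonneg ht1'.le, mul_pow,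
      mul_pow]
    ring
  have hcomm : ⟪u, v⟫ = ⟪v, u⟫ := real_inner_comm v u
  have hco := hcoco x y
  rw [← hu, ← hv] at hco
  have htl' : 1 - 2 * γ ≤ t * (2 - 2 * γ) := by
    rw [ge_iff_le, div_le_iff₀ (by linarith)] at htl
    linarith
  -- key: (1-t)^2 * ‖v-u‖^2 ≤ ‖t•u+(1-t)•v‖^2
  have key : (1 - t) ^ 2 * ‖v - u‖ ^ 2 ≤ ‖t • u + (1 - t) • v‖ ^ 2 := by
    rw [h2, h3, hcomm]
    nlinarith [sq_nonneg (‖u‖), sq_nonneg t]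
  have hfrac : t ^ 2 * ‖v - u‖ ^ 2 = (t ^ 2 / (1 - t) ^ 2) * ((1 - t) ^ 2 * ‖v - u‖ ^ 2) := by
    field_simp
  rw [h1, hfrac]
  exact mul_le_mul_of_nonneg_left key (by positivity)
end

section
/- Let D : H → H be γ-cocoercive with γ ∈ (0,1) and (1/γ)-Lipschitz, let t ∈ (0,1) with t ≤ (1−2γ)/(2−2γ), and set Dᵗ = tD + (1−t)I, a = Dᵗ(x) − Dᵗ(y), b = x − y. Then ‖b − a‖² ≤ (t²(1−γ)²/(t+γ−tγ)²)‖a‖² for all x,y ∈ H. -/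
open RealInnerProductSpace

/-!
Write `u = D x - D y`, `v = x - y` and `s = t + γ - t γ`, so that `b - a = t (v - u)` and
`a = t u + (1 - t) v`. After expanding the norms, the claim becomes a quadratic inequality in
`‖u‖²`, `‖v‖²` and `⟪v, u⟫`, and the difference of its two sides is the combination
`(1 - 2s) (‖v‖² - γ² ‖u‖²) + 2 (s - γ + γ s) (⟪v, u⟫ - γ ‖u‖²)` of the Lipschitz and the
cocoercivity gaps; the step-size bound on `t` is exactly what makes `1 - 2s` nonnegative.
-/

lemma two_mul_add_sub_mul_le_one {γ t : ℝ} (hγ1 : γ < 1) (htl : t ≤ (1 - 2 * γ) / (2 - 2 * γ)) :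
    2 * (t + γ - t * γ) ≤ 1 := by
  have h : t * (2 - 2 * γ) ≤ 1 - 2 * γ := (le_div_iff₀ (by linarith)).mp htl
  linarith

section InnerProduct

variable {H : Type*} [NormedAddCommGroup H] [InnerProductSpace ℝ H]

lemma sq_mul_norm_sub_sq_le_of_cocoercive {u v : H} {γ t : ℝ} (hγ0 : 0 ≤ γ) (hγ1 : γ ≤ 1)
    (ht0 : 0 ≤ t) (hstep : 2 * (t + γ - t * γ) ≤ 1)
    (hcoco : γ * ‖u‖ ^ 2 ≤ ⟪v, u⟫) (hlip : γ * ‖u‖ ≤ ‖v‖) :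
    (t + γ - t * γ) ^ 2 * ‖v - u‖ ^ 2 ≤ (1 - γ) ^ 2 * ‖t • u + (1 - t) • v‖ ^ 2 := by
  set s := t + γ - t * γ
  have hlip_sq : γ ^ 2 * ‖u‖ ^ 2 ≤ ‖v‖ ^ 2 := by
    rw [← mul_pow]
    exact pow_le_pow_left₀ (by positivity) hlip 2
  have hcoeff : 0 ≤ s - γ + γ * s := by
    have : 0 ≤ t * (1 - γ) := mul_nonneg ht0 (by linarith)
    have : 0 ≤ γ * s := mul_nonneg hγ0 (by linarith)
    linarith
  have hexpand_sub : ‖v - u‖ ^ 2 = ‖v‖ ^ 2 - 2 * ⟪v, u⟫ + ‖u‖ ^ 2 := norm_sub_sq_real v u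
  have hexpand_add : ‖t • u + (1 - t) • v‖ ^ 2
      = t ^ 2 * ‖u‖ ^ 2 + 2 * t * (1 - t) * ⟪v, u⟫ + (1 - t) ^ 2 * ‖v‖ ^ 2 := by
    rw [norm_add_sq_real, norm_smul, norm_smul, real_inner_smul_left, real_inner_smul_right,
      real_inner_comm u v, mul_pow, mul_pow, Real.norm_eq_abs, Real.norm_eq_abs, sq_abs, sq_abs]
    ring
  have hgap : (1 - γ) ^ 2 * ‖t • u + (1 - t) • v‖ ^ 2 - s ^ 2 * ‖v - u‖ ^ 2
      = (1 - 2 * s) * (‖v‖ ^ 2 - γ ^ 2 * ‖u‖ ^ 2)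
        + 2 * (s - γ + γ * s) * (⟪v, u⟫ - γ * ‖u‖ ^ 2) := by
    rw [hexpand_add, hexpand_sub]
    ring
  have : 0 ≤ (1 - 2 * s) * (‖v‖ ^ 2 - γ ^ 2 * ‖u‖ ^ 2) :=
    mul_nonneg (by linarith) (by linarith)
  have : 0 ≤ 2 * (s - γ + γ * s) * (⟪v, u⟫ - γ * ‖u‖ ^ 2) :=
    mul_nonneg (by linarith) (by linarith)
  linarith

end InnerProduct

theorem case2_key_inequality_general
    {H : Type*} [NormedAddCommGroup H] [InnerProductSpace ℝ H]
    (D : H → H) (γ t : ℝ) (hγ0 : 0 < γ) (hγ1 : γ < 1)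
    (ht0 : 0 < t) (htl : t ≤ (1 - 2 * γ) / (2 - 2 * γ))
    (hcoco : ∀ x y : H, ⟪x - y, D x - D y⟫ ≥ γ * ‖D x - D y‖ ^ 2)
    (hlip : ∀ x y : H, ‖D x - D y‖ ≤ (1 / γ) * ‖x - y‖) :
    ∀ x y : H,
      ‖(x - y) - ((t • D x + (1 - t) • x) - (t • D y + (1 - t) • y))‖ ^ 2 ≤
        (t ^ 2 * (1 - γ) ^ 2 / (t + γ - t * γ) ^ 2) *
          ‖(t • D x + (1 - t) • x) - (t • D y + (1 - t) • y)‖ ^ 2 := by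
  intro x y
  set s := t + γ - t * γ
  have hstep : 2 * s ≤ 1 := two_mul_add_sub_mul_le_one hγ1 htl
  have hs : 0 < s := by nlinarith
  have hlip_xy : γ * ‖D x - D y‖ ≤ ‖x - y‖ := by
    have := hlip x y
    rwa [one_div_mul_eq_div, le_div_iff₀ hγ0, mul_comm] at this
  have hkey := sq_mul_norm_sub_sq_le_of_cocoercive hγ0.le hγ1.le ht0.le hstep (hcoco x y) hlip_xy
  have hb : (x - y) - ((t • D x + (1 - t) • x) - (t • D y + (1 - t) • y))
      = t • ((x - y) - (D x - D y)) := by module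
  have ha : (t • D x + (1 - t) • x) - (t • D y + (1 - t) • y)
      = t • (D x - D y) + (1 - t) • (x - y) := by module
  rw [hb, ha, norm_smul, mul_pow, Real.norm_eq_abs, sq_abs, mul_div_assoc, mul_assoc]
  gcongr
  rw [div_mul_eq_mul_div, le_div_iff₀ (by positivity), mul_comm]
  exact hkey

theorem case2_key_inequality
    {H : Type*} [NormedAddCommGroup H] [InnerProductSpace ℝ H]
    (D : H → H) (γ t : ℝ) (hγ0 : 0 < γ) (hγ1 : γ < 1)
    (ht0 : 0 < t) (ht1 : t < 1) (htl : t ≤ (1 - 2 * γ) / (2 - 2 * γ))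
    (hcoco : ∀ x y : H, ⟪x - y, D x - D y⟫ ≥ γ * ‖D x - D y‖ ^ 2)
    (hlip : ∀ x y : H, ‖D x - D y‖ ≤ (1 / γ) * ‖x - y‖) :
    ∀ x y : H,
      ‖(x - y) - ((t • D x + (1 - t) • x) - (t • D y + (1 - t) • y))‖ ^ 2 ≤
        (t ^ 2 * (1 - γ) ^ 2 / (t + γ - t * γ) ^ 2) *
          ‖(t • D x + (1 - t) • x) - (t • D y + (1 - t) • y)‖ ^ 2 :=
  case2_key_inequality_general D γ t hγ0 hγ1 ht0 htl hcoco hlip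
end

section
/- Let F : H → ℝ be r-weakly convex with L-Lipschitz gradient ∇F (so for all x,y and f_y = ∇F(y): F(x) − F(y) ≥ ⟨f_y, x−y⟩ − (r/2)‖x−y‖² and F(x) − F(y) ≤ ⟨f_y, x−y⟩ + (L/2)‖x−y‖²). Consider the ADMM-type updates with βb⁺ ∈ ∂F(v⁺), βb ∈ ∂F(v), b⁺ = b + u⁺ − v⁺. Then L_β(u⁺,v,b) − L_β(u⁺,v⁺,b⁺) ≥ (β/2 − r/2 − L²/β)‖v − v⁺‖², where L_β(u,v,b) = F(v) + G(u) + β⟨b, u−v⟩ + (β/2)‖u−v‖². -/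
open RealInnerProductSpace

/-- Descent estimate for the v- and b-updates of the ADMM Lyapunov function. -/
theorem admm_vb_update_descent
    {H : Type*} [NormedAddCommGroup H] [InnerProductSpace ℝ H]
    (F G : H → ℝ) (gradF : H → H) (r L β : ℝ) (hβ : 0 < β)
    (hweak : ∀ x y : H, F x - F y ≥ ⟪gradF y, x - y⟫ - (r / 2) * ‖x - y‖ ^ 2)
    (hsmooth : ∀ x y : H, F x - F y ≤ ⟪gradF y, x - y⟫ + (L / 2) * ‖x - y‖ ^ 2)
    (hlip : ∀ x y : H, ‖gradF x - gradF y‖ ≤ L * ‖x - y‖)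
    (uplus v vplus b bplus : H)
    (hb : β • b = gradF v)
    (hbplus : β • bplus = gradF vplus)
    (hupdate : bplus = b + uplus - vplus) :
    (F v + G uplus + β * ⟪b, uplus - v⟫ + (β / 2) * ‖uplus - v‖ ^ 2) -
      (F vplus + G uplus + β * ⟪bplus, uplus - vplus⟫ +
        (β / 2) * ‖uplus - vplus‖ ^ 2) ≥
    (β / 2 - r / 2 - L ^ 2 / β) * ‖v - vplus‖ ^ 2 := by
  have hu : uplus - vplus = bplus - b := by rw [hupdate]; abel
  have hu2 : uplus - v = (bplus - b) - (v - vplus) := by rw [hupdate]; abel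
  set e := bplus - b with he
  set d := v - vplus with hd
  have h1 := hweak v vplus
  rw [← hbplus, real_inner_smul_left] at h1
  have hgrad : gradF vplus - gradF v = β • e := by
    rw [← hb, ← hbplus, he, smul_sub]
  have hlip1 : β * ‖e‖ ≤ L * ‖d‖ := by
    have h := hlip vplus v
    rw [hgrad, norm_smul, Real.norm_eq_abs, abs_of_pos hβ] at h
    calc β * ‖e‖ ≤ L * ‖vplus - v‖ := h
      _ = L * ‖d‖ := by rw [hd, norm_sub_rev]
  have hdiv : β * ‖e‖ ^ 2 ≤ L ^ 2 / β * ‖d‖ ^ 2 := by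
    rw [div_mul_eq_mul_div, le_div_iff₀ hβ]
    nlinarith [mul_nonneg hβ.le (norm_nonneg e), norm_nonneg d, norm_nonneg e]
  have hexp : ‖e - d‖ ^ 2 = ‖e‖ ^ 2 - 2 * ⟪e, d⟫ + ‖d‖ ^ 2 := by
    rw [norm_sub_sq_real]
  have hA : ⟪b, e - d⟫ = ⟪b, e⟫ - ⟪b, d⟫ := inner_sub_right _ _ _
  have hB : ⟪bplus, e⟫ - ⟪b, e⟫ = ‖e‖ ^ 2 := by
    rw [← inner_sub_left, ← he, real_inner_self_eq_norm_sq]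
  have hC : ⟪e, d⟫ = ⟪bplus, d⟫ - ⟪b, d⟫ := by
    rw [he, inner_sub_left]
  rw [hu, hu2, hexp, hA]
  nlinarith [h1, hdiv, hB, hC]
end
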